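/- Let Y be distributed according to the Haar (uniform) measure on the complex unit sphere in ℂ^n. Then for all real c > 1 and any coordinate index 1 ≤ i ≤ n, Pr[|Y[i]|² ≤ (2n)^{-3c}] ≤ 2·(2n)^{1-c}. -/

import Mathlib

open MeasureTheory Real ENNReal

noncomputable def rotMap {n : ℕ} (θ : ℝ) (i j : Fin n) (y : EuclideanSpace ℂ (Fin n)) :
    EuclideanSpace ℂ (Fin n) :=
  WithLp.toLp 2 fun k => if k = i then (Real.cos θ : ℂ) * y i - (Real.sin θ : ℂ) * y j
    else if k = j then (Real.sin θ : ℂ) * y i + (Real.cos θ : ℂ) * y j else y k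

lemma rotMap_apply_i {n : ℕ} (θ : ℝ) (i j : Fin n) (y : EuclideanSpace ℂ (Fin n)) :
    rotMap θ i j y i = (Real.cos θ : ℂ) * y i - (Real.sin θ : ℂ) * y j := by
  simp [rotMap]

lemma rotMap_apply_j {n : ℕ} (θ : ℝ) (i j : Fin n) (hij : i ≠ j) (y : EuclideanSpace ℂ (Fin n)) :
    rotMap θ i j y j = (Real.sin θ : ℂ) * y i + (Real.cos θ : ℂ) * y j := by
  simp [rotMap, hij.symm]

lemma rotMap_apply_other {n : ℕ} (θ : ℝ) (i j k : Fin n) (hk : k ≠ i) (hk' : k ≠ j)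
    (y : EuclideanSpace ℂ (Fin n)) : rotMap θ i j y k = y k := by
  simp [rotMap, hk, hk']

-- norm pair identity
lemma norm_pair (θ : ℝ) (a b : ℂ) :
    ‖(Real.cos θ : ℂ) * a - (Real.sin θ : ℂ) * b‖ ^ 2
      + ‖(Real.sin θ : ℂ) * a + (Real.cos θ : ℂ) * b‖ ^ 2 = ‖a‖ ^ 2 + ‖b‖ ^ 2 := by
  have h := Real.sin_sq_add_cos_sq θ
  simp only [← Complex.normSq_eq_norm_sq]
  simp only [Complex.normSq_apply, Complex.sub_re, Complex.sub_im, Complex.add_re, Complex.add_im,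
    Complex.mul_re, Complex.mul_im, Complex.ofReal_re, Complex.ofReal_im]
  ring_nf
  nlinarith [h]

lemma rotMap_rotMap {n : ℕ} (θ : ℝ) (i j : Fin n) (hij : i ≠ j) (y : EuclideanSpace ℂ (Fin n)) :
    rotMap (-θ) i j (rotMap θ i j y) = y := by
  ext k
  have h := congrArg (Complex.ofReal) (Real.sin_sq_add_cos_sq θ)
  push_cast at h
  by_cases hki : k = i
  · subst hki
    rw [rotMap_apply_i, rotMap_apply_i, rotMap_apply_j _ _ _ hij]
    push_cast [Real.cos_neg, Real.sin_neg]
    linear_combination (y k) * h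
  · by_cases hkj : k = j
    · subst hkj
      rw [rotMap_apply_j _ _ _ hij, rotMap_apply_i, rotMap_apply_j _ _ _ hij]
      push_cast [Real.cos_neg, Real.sin_neg]
      linear_combination (y k) * h
    · rw [rotMap_apply_other _ _ _ _ hki hkj, rotMap_apply_other _ _ _ _ hki hkj]

lemma sum_split {n : ℕ} (f : Fin n → ℝ) (i j : Fin n) (hij : i ≠ j) :
    ∑ k, f k = f i + f j + ∑ k ∈ (Finset.univ.erase i).erase j, f k := by
  rw [← Finset.add_sum_erase _ f (Finset.mem_univ i)]
  rw [← Finset.add_sum_erase _ f (Finset.mem_erase.2 ⟨hij.symm, Finset.mem_univ j⟩)]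
  ring

noncomputable def rotIso {n : ℕ} (θ : ℝ) (i j : Fin n) (hij : i ≠ j) :
    EuclideanSpace ℂ (Fin n) ≃ₗᵢ[ℂ] EuclideanSpace ℂ (Fin n) where
  toFun := rotMap θ i j
  invFun := rotMap (-θ) i j
  map_add' x y := by
    ext k
    simp only [rotMap, PiLp.add_apply, PiLp.toLp_apply]
    split <;> [skip; split] <;> ring
  map_smul' c x := by
    ext k
    simp only [rotMap, PiLp.toLp_apply, PiLp.smul_apply, smul_eq_mul, RingHom.id_apply]
    split <;> [skip; split] <;> ring
  left_inv y := rotMap_rotMap θ i j hij y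
  right_inv y := by
    have := rotMap_rotMap (-θ) i j hij y
    rwa [neg_neg] at this
  norm_map' y := by
    show ‖rotMap θ i j y‖ = ‖y‖
    have h2 : ∀ z : EuclideanSpace ℂ (Fin n), ‖z‖ = Real.sqrt (∑ k, ‖z k‖ ^ 2) := by
      intro z
      rw [EuclideanSpace.norm_eq]
    rw [h2, h2]
    congr 1
    rw [sum_split (fun k => ‖rotMap θ i j y k‖ ^ 2) i j hij,
      sum_split (fun k => ‖y k‖ ^ 2) i j hij]
    have e1 : ∑ k ∈ (Finset.univ.erase i).erase j, ‖rotMap θ i j y k‖ ^ 2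
        = ∑ k ∈ (Finset.univ.erase i).erase j, ‖y k‖ ^ 2 := by
      refine Finset.sum_congr rfl fun k hk => ?_
      rw [Finset.mem_erase, Finset.mem_erase] at hk
      rw [rotMap_apply_other _ _ _ _ hk.2.1 hk.1]
    simp only [e1, rotMap_apply_i, rotMap_apply_j _ _ _ hij, norm_pair]

-- if two rotated first coordinates are both small, then sin of angle difference is small
lemma two_small (t : ℝ) (ht : 0 ≤ t) (a b : ℂ) (θ θ' : ℝ)
    (h1 : ‖(Real.cos θ : ℂ) * a - (Real.sin θ : ℂ) * b‖ ^ 2 ≤ t)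
    (h2 : ‖(Real.cos θ' : ℂ) * a - (Real.sin θ' : ℂ) * b‖ ^ 2 ≤ t) :
    (‖a‖ ^ 2 + ‖b‖ ^ 2) * Real.sin (θ' - θ) ^ 2 ≤ 8 * t := by
  set v := (Real.cos θ : ℂ) * a - (Real.sin θ : ℂ) * b with hv
  set w := (Real.cos θ' : ℂ) * a - (Real.sin θ' : ℂ) * b with hw
  have ea : a * (Real.sin (θ' - θ) : ℂ) = v * (Real.sin θ' : ℂ) - w * (Real.sin θ : ℂ) := by
    rw [hv, hw]
    push_cast [Real.sin_sub]
    ring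
  have eb : b * (Real.sin (θ' - θ) : ℂ) = v * (Real.cos θ' : ℂ) - w * (Real.cos θ : ℂ) := by
    rw [hv, hw]
    push_cast [Real.sin_sub]
    ring
  have key : ∀ (z : ℂ) (hz : z * (Real.sin (θ' - θ) : ℂ)
        = v * (Real.sin θ' : ℂ) - w * (Real.sin θ : ℂ) ∨ z * (Real.sin (θ' - θ) : ℂ)
        = v * (Real.cos θ' : ℂ) - w * (Real.cos θ : ℂ)),
      ‖z‖ * |Real.sin (θ' - θ)| ≤ ‖v‖ + ‖w‖ := by
    intro z hz
    have h0 : ‖z‖ * |Real.sin (θ' - θ)| = ‖z * (Real.sin (θ' - θ) : ℂ)‖ := by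
      rw [norm_mul, Complex.norm_real, Real.norm_eq_abs]
    have bnd : ∀ (p q : ℝ), ‖v * (p : ℂ) - w * (q : ℂ)‖ ≤ ‖v‖ * |p| + ‖w‖ * |q| := by
      intro p q
      refine (norm_sub_le _ _).trans ?_
      simp [norm_mul, Complex.norm_real, Real.norm_eq_abs]
    rcases hz with hz | hz <;> rw [h0, hz] <;>
      refine (bnd _ _).trans ?_ <;>
      have := Real.abs_sin_le_one θ' <;>
      have := Real.abs_sin_le_one θ <;>
      have := Real.abs_cos_le_one θ' <;>
      have := Real.abs_cos_le_one θ <;>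
      nlinarith [norm_nonneg v, norm_nonneg w]
  have na := key a (Or.inl ea)
  have nb := key b (Or.inr eb)
  have hvt : ‖v‖ ≤ Real.sqrt t := by
    rw [← Real.sqrt_sq (norm_nonneg v)]
    exact Real.sqrt_le_sqrt h1
  have hwt : ‖w‖ ≤ Real.sqrt t := by
    rw [← Real.sqrt_sq (norm_nonneg w)]
    exact Real.sqrt_le_sqrt h2
  have hts : Real.sqrt t ^ 2 = t := Real.sq_sqrt ht
  have sq4 : ∀ x : ℝ, 0 ≤ x → x ≤ ‖v‖ + ‖w‖ → x ^ 2 ≤ 4 * t := by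
    intro x hx0 hx
    have hx2 : x ≤ 2 * Real.sqrt t := by linarith
    calc x ^ 2 ≤ (2 * Real.sqrt t) ^ 2 := by
          exact pow_le_pow_left₀ hx0 hx2 2
      _ = 4 * t := by nlinarith [hts]
  have h8 := sq4 _ (mul_nonneg (norm_nonneg a) (abs_nonneg _)) na
  have h9 := sq4 _ (mul_nonneg (norm_nonneg b) (abs_nonneg _)) nb
  have hsq : |Real.sin (θ' - θ)| ^ 2 = Real.sin (θ' - θ) ^ 2 := sq_abs _
  nlinarith [h8, h9]

lemma sin_lower (m d : ℕ) (hd1 : 1 ≤ d) (hdm : d ≤ m - 1) (hm : 2 ≤ m) :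
    2 / m ≤ Real.sin (d * Real.pi / m) := by
  have hmpos : (0:ℝ) < m := by positivity
  have hπ := Real.pi_pos
  have hdm' : (d:ℝ) ≤ m - 1 := by
    have : (d:ℝ) ≤ ((m - 1 : ℕ) : ℝ) := by exact_mod_cast hdm
    rw [Nat.cast_sub (by omega)] at this
    simpa using this
  have hd1' : (1:ℝ) ≤ d := by exact_mod_cast hd1
  set x := (d:ℝ) * Real.pi / m with hx
  have hx0 : 0 < x := by positivity
  rcases le_or_gt x (Real.pi / 2) with hhalf | hhalf
  · have := Real.mul_le_sin hx0.le hhalf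
    calc (2:ℝ)/m ≤ 2 / Real.pi * x := by
          have hexp : 2 / Real.pi * x = 2 * d / m := by
            rw [hx]; field_simp
          rw [hexp]
          gcongr
          linarith
      _ ≤ Real.sin x := this
  · have hxπ : x ≤ Real.pi := by
      rw [hx, div_le_iff₀ hmpos]
      nlinarith
    have h1 : Real.sin x = Real.sin (Real.pi - x) := (Real.sin_pi_sub x).symm
    have h2 : 0 ≤ Real.pi - x := by linarith
    have h3 : Real.pi - x ≤ Real.pi / 2 := by linarith
    have := Real.mul_le_sin h2 h3
    have h4 : Real.pi / m ≤ Real.pi - x := by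
      rw [hx]
      rw [le_sub_iff_add_le, ← add_div, div_le_iff₀ hmpos]
      nlinarith
    calc (2:ℝ)/m ≤ 2 / Real.pi * (Real.pi - x) := by
          rw [div_le_iff₀ hmpos]
          calc (2:ℝ) = 2 / Real.pi * Real.pi := by field_simp
            _ ≤ 2 / Real.pi * ((Real.pi - x) * m) := by
                have : Real.pi ≤ (Real.pi - x) * m := by
                  calc Real.pi = Real.pi / m * m := by field_simp
                    _ ≤ (Real.pi - x) * m := by
                        exact mul_le_mul_of_nonneg_right h4 hmpos.le
                exact mul_le_mul_of_nonneg_left this (by positivity)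
            _ = 2 / Real.pi * (Real.pi - x) * m := by ring
      _ ≤ Real.sin (Real.pi - x) := this
      _ = Real.sin x := h1.symm

lemma rotIso_apply {n : ℕ} (θ : ℝ) (i j : Fin n) (hij : i ≠ j) (y : EuclideanSpace ℂ (Fin n)) :
    rotIso θ i j hij y = rotMap θ i j y := rfl

lemma continuous_coord {n : ℕ} (i : Fin n) :
    Continuous (fun y : EuclideanSpace ℂ (Fin n) => y i) :=
  (EuclideanSpace.proj i : EuclideanSpace ℂ (Fin n) →L[ℂ] ℂ).continuous

lemma pair_bound {n : ℕ} [MeasurableSpace (EuclideanSpace ℂ (Fin n))]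
    [BorelSpace (EuclideanSpace ℂ (Fin n))]
    (μ : Measure (EuclideanSpace ℂ (Fin n))) [IsProbabilityMeasure μ]
    (hinv : ∀ U : EuclideanSpace ℂ (Fin n) ≃ₗᵢ[ℂ] EuclideanSpace ℂ (Fin n), μ.map U = μ)
    (i j : Fin n) (hij : i ≠ j) (t s : ℝ) (ht : 0 ≤ t) (m : ℕ) (hm : 2 ≤ m)
    (hcrit : 8 * t * m ^ 2 < 4 * s) :
    μ {y : EuclideanSpace ℂ (Fin n) | ‖y i‖ ^ 2 ≤ t ∧ s ≤ ‖y i‖ ^ 2 + ‖y j‖ ^ 2}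
      ≤ (m : ℝ≥0∞)⁻¹ := by
  set A := {y : EuclideanSpace ℂ (Fin n) | ‖y i‖ ^ 2 ≤ t ∧ s ≤ ‖y i‖ ^ 2 + ‖y j‖ ^ 2} with hA
  have hc1 : Continuous fun y : EuclideanSpace ℂ (Fin n) => ‖y i‖ ^ 2 :=
    (continuous_coord i).norm.pow 2
  have hc2 : Continuous fun y : EuclideanSpace ℂ (Fin n) => ‖y j‖ ^ 2 :=
    (continuous_coord j).norm.pow 2
  have hAmeas : MeasurableSet A := by
    apply MeasurableSet.inter
    · exact (isClosed_le hc1 continuous_const).measurableSet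
    · exact (isClosed_le continuous_const (hc1.add hc2)).measurableSet
  set θ : ℕ → ℝ := fun k => k * Real.pi / m with hθ
  set U : ℕ → (EuclideanSpace ℂ (Fin n) ≃ₗᵢ[ℂ] EuclideanSpace ℂ (Fin n)) :=
    fun k => rotIso (θ k) i j hij with hU
  set B : ℕ → Set (EuclideanSpace ℂ (Fin n)) := fun k => (U k) ⁻¹' A with hB
  have hBmeas : ∀ k, MeasurableSet (B k) := fun k =>
    hAmeas.preimage (U k).continuous.measurable
  have hBμ : ∀ k, μ (B k) = μ A := by
    intro k
    have h1 := hinv (U k)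
    calc μ (B k) = μ.map (U k) A := by
          rw [Measure.map_apply (U k).continuous.measurable hAmeas]
      _ = μ A := by rw [h1]
  -- membership description
  have hmem : ∀ k y, y ∈ B k ↔
      (‖(Real.cos (θ k) : ℂ) * y i - (Real.sin (θ k) : ℂ) * y j‖ ^ 2 ≤ t
        ∧ s ≤ ‖y i‖ ^ 2 + ‖y j‖ ^ 2) := by
    intro k y
    have hri : (U k y) i = (Real.cos (θ k) : ℂ) * y i - (Real.sin (θ k) : ℂ) * y j :=
      rotMap_apply_i _ _ _ _
    have hrj : (U k y) j = (Real.sin (θ k) : ℂ) * y i + (Real.cos (θ k) : ℂ) * y j :=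
      rotMap_apply_j _ _ _ hij _
    constructor
    · rintro ⟨h1, h2⟩
      rw [hri] at h1
      refine ⟨h1, ?_⟩
      rw [hri, hrj, norm_pair] at h2
      exact h2
    · rintro ⟨h1, h2⟩
      refine ⟨by rw [hri]; exact h1, ?_⟩
      show s ≤ ‖(U k y) i‖ ^ 2 + ‖(U k y) j‖ ^ 2
      rw [hri, hrj, norm_pair]
      exact h2
  -- pairwise disjoint
  have hdisj : (↑(Finset.range m) : Set ℕ).PairwiseDisjoint B := by
    intro k hk k' hk' hkk'
    simp only [Finset.coe_range, Set.mem_Iio] at hk hk'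
    rw [Function.onFun, Set.disjoint_left]
    intro y hy hy'
    rw [hmem] at hy hy'
    obtain ⟨h1, h2⟩ := hy
    obtain ⟨h1', -⟩ := hy'
    have hkey := two_small t ht (y i) (y j) (θ k) (θ k') h1 h1'
    -- sin (θ k' - θ k) : difference
    -- wlog analysis on |k' - k|
    have habs : ∃ d : ℕ, 1 ≤ d ∧ d ≤ m - 1 ∧
        Real.sin (θ k' - θ k) ^ 2 = Real.sin (d * Real.pi / m) ^ 2 := by
      rcases lt_or_gt_of_ne hkk' with h | h
      · refine ⟨k' - k, by omega, by omega, ?_⟩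
        congr 2
        rw [hθ]
        push_cast [Nat.cast_sub h.le]
        ring
      · refine ⟨k - k', by omega, by omega, ?_⟩
        have : θ k' - θ k = -((↑(k - k') : ℝ) * Real.pi / m) := by
          rw [hθ]
          push_cast [Nat.cast_sub h.le]
          ring
        rw [this, Real.sin_neg, neg_sq]
    obtain ⟨d, hd1, hdm, hsin⟩ := habs
    have hs2 := sin_lower m d hd1 hdm hm
    have hmpos : (0:ℝ) < m := by positivity
    have hsinsq : (2 / m : ℝ) ^ 2 ≤ Real.sin (θ k' - θ k) ^ 2 := by
      rw [hsin]
      exact pow_le_pow_left₀ (by positivity) hs2 2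
    have hr : s ≤ ‖y i‖ ^ 2 + ‖y j‖ ^ 2 := h2
    have : s * (2 / m) ^ 2 ≤ 8 * t := by
      calc s * (2/m)^2 ≤ (‖y i‖ ^ 2 + ‖y j‖ ^ 2) * Real.sin (θ k' - θ k) ^ 2 := by
            apply mul_le_mul hr hsinsq (by positivity) (by positivity)
        _ ≤ 8 * t := hkey
    have hms : s * (2/m)^2 = 4 * s / m^2 := by field_simp; ring
    rw [hms, div_le_iff₀ (by positivity)] at this
    linarith
  -- sum up
  have hsum : ∑ k ∈ Finset.range m, μ (B k) = μ (⋃ k ∈ Finset.range m, B k) :=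
    (measure_biUnion_finset hdisj fun k _ => hBmeas k).symm
  have hle1 : (m : ℝ≥0∞) * μ A ≤ 1 := by
    calc (m : ℝ≥0∞) * μ A = ∑ k ∈ Finset.range m, μ (B k) := by
          simp [hBμ, Finset.sum_const, mul_comm]
      _ = μ (⋃ k ∈ Finset.range m, B k) := hsum
      _ ≤ 1 := by
          rw [← measure_univ (μ := μ)]
          exact measure_mono (Set.subset_univ _)
  rw [ENNReal.le_inv_iff_mul_le]
  rwa [mul_comm]

/-- Let `Y` be distributed according to the Haar (uniform) measure on the
complex unit sphere of `ℂ^n` (formalized as: any probability measure concentrated on the unit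
sphere that is invariant under all `ℂ`-linear isometries, i.e. the unique unitarily invariant
probability measure). Then for all `c > 1` and any coordinate `i`,
`Pr[|Y[i]|² ≤ (2n)^{-3c}] ≤ 2 (2n)^{1-c}`. -/
theorem haar_complex_sphere_coord_small_prob (n : ℕ) (hn : 0 < n)
    [MeasurableSpace (EuclideanSpace ℂ (Fin n))] [BorelSpace (EuclideanSpace ℂ (Fin n))]
    (μ : Measure (EuclideanSpace ℂ (Fin n))) [IsProbabilityMeasure μ]
    (hsupp : μ (Metric.sphere (0 : EuclideanSpace ℂ (Fin n)) 1) = 1)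
    (hinv : ∀ U : EuclideanSpace ℂ (Fin n) ≃ₗᵢ[ℂ] EuclideanSpace ℂ (Fin n),
      μ.map U = μ)
    (c : ℝ) (hc : 1 < c) (i : Fin n) :
    (μ {y : EuclideanSpace ℂ (Fin n) | ‖y i‖ ^ 2 ≤ (2 * (n : ℝ)) ^ (-(3 * c))}).toReal
      ≤ 2 * (2 * (n : ℝ)) ^ (1 - c) := by
  have h2n : (2:ℝ) ≤ 2 * n := by
    have : (1:ℝ) ≤ n := by exact_mod_cast hn
    linarith
  have h2npos : (0:ℝ) < 2 * n := by linarith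
  have h2n1 : (1:ℝ) < 2 * n := by linarith
  set t : ℝ := (2 * (n : ℝ)) ^ (-(3 * c)) with htdef
  have htpos : 0 < t := Real.rpow_pos_of_pos h2npos _
  set s : ℝ := (n : ℝ)⁻¹ with hsdef
  have hnpos : (0:ℝ) < n := by exact_mod_cast hn
  have hspos : 0 < s := by positivity
  -- t < s
  have hts : t < s := by
    have h1 : t = ((2 * (n : ℝ)) ^ (3 * c))⁻¹ := by
      rw [htdef, Real.rpow_neg h2npos.le]
    have h2 : (2 * (n : ℝ)) ^ (1:ℝ) ≤ (2 * (n : ℝ)) ^ (3 * c) := by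
      apply Real.rpow_le_rpow_of_exponent_le h2n1.le
      nlinarith
    rw [Real.rpow_one] at h2
    rw [h1, hsdef]
    apply inv_strictAnti₀ hnpos
    linarith
  set D : ℝ := (2 * (n : ℝ)) ^ ((3 * c - 1) / 2) with hDdef
  have hD2 : 2 < D := by
    have h1 : (2:ℝ) ^ (1:ℝ) < (2:ℝ) ^ ((3 * c - 1) / 2) := by
      apply Real.rpow_lt_rpow_of_exponent_lt one_lt_two
      linarith
    have h2 : (2:ℝ) ^ ((3 * c - 1) / 2) ≤ (2 * (n : ℝ)) ^ ((3 * c - 1) / 2) := by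
      apply Real.rpow_le_rpow (by norm_num) h2n (by linarith)
    rw [Real.rpow_one] at h1
    linarith
  have hDpos : 0 < D := by linarith
  set m : ℕ := ⌈D⌉₊ - 1 with hmdef
  have hceil3 : 3 ≤ ⌈D⌉₊ := by
    have h2' : (2:ℕ) < ⌈D⌉₊ := Nat.lt_ceil.2 (by push_cast; exact hD2)
    omega
  have hm2 : 2 ≤ m := by rw [hmdef]; omega
  have hmcast : (m : ℝ) = (⌈D⌉₊ : ℝ) - 1 := by
    rw [hmdef]
    push_cast [Nat.cast_sub (by omega : 1 ≤ ⌈D⌉₊)]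
    ring
  have hmD : (m : ℝ) < D := by
    rw [hmcast]
    have := Nat.ceil_lt_add_one hDpos.le
    linarith
  have hmge : D - 1 ≤ (m : ℝ) := by
    rw [hmcast]
    have := Nat.le_ceil D
    linarith
  have hmpos : (0:ℝ) < m := by
    have : (2:ℝ) ≤ m := by exact_mod_cast hm2
    linarith
  -- key: D^2 = (2n)^(3c-1) and 8 t D^2 = 4 s
  have hD2eq : D ^ 2 = (2 * (n : ℝ)) ^ (3 * c - 1) := by
    rw [hDdef, ← Real.rpow_natCast ((2 * (n : ℝ)) ^ ((3 * c - 1) / 2)) 2,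
      ← Real.rpow_mul h2npos.le]
    norm_num
  have htD : 8 * t * D ^ 2 = 4 * s := by
    rw [hD2eq, htdef, mul_assoc, ← Real.rpow_add h2npos]
    have : -(3 * c) + (3 * c - 1) = -1 := by ring
    rw [this, Real.rpow_neg_one, hsdef]
    field_simp
    ring
  have hcrit : 8 * t * (m:ℝ) ^ 2 < 4 * s := by
    have hsq : (m:ℝ) ^ 2 < D ^ 2 := by
      apply pow_lt_pow_left₀ hmD hmpos.le
      norm_num
    calc 8 * t * (m:ℝ)^2 < 8 * t * D^2 := by nlinarith
      _ = 4 * s := htD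
  -- bad set containment
  set bad := {y : EuclideanSpace ℂ (Fin n) | ‖y i‖ ^ 2 ≤ t} with hbad
  set A : Fin n → Set (EuclideanSpace ℂ (Fin n)) :=
    fun j => {y | ‖y i‖ ^ 2 ≤ t ∧ s ≤ ‖y i‖ ^ 2 + ‖y j‖ ^ 2} with hAdef
  have hsub : bad ⊆ (⋃ j ∈ Finset.univ.erase i, A j) ∪
      (Metric.sphere (0 : EuclideanSpace ℂ (Fin n)) 1)ᶜ := by
    intro y hy
    by_cases hysph : y ∈ Metric.sphere (0 : EuclideanSpace ℂ (Fin n)) 1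
    · left
      have hnorm : ‖y‖ = 1 := by
        simpa using hysph
      have hsum : ∑ k, ‖y k‖ ^ 2 = 1 := by
        have h0 := (EuclideanSpace.norm_eq y).symm
        rw [hnorm] at h0
        rwa [Real.sqrt_eq_one] at h0
      have hex : ∃ k, s ≤ ‖y k‖ ^ 2 := by
        by_contra hcon
        push_neg at hcon
        have : ∑ k, ‖y k‖ ^ 2 < ∑ _k : Fin n, s := by
          apply Finset.sum_lt_sum_of_nonempty
          · exact Finset.univ_nonempty_iff.2 ⟨i⟩
          · exact fun k _ => hcon k
        rw [Finset.sum_const, Finset.card_univ, Fintype.card_fin, hsum, nsmul_eq_mul,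
          hsdef] at this
        field_simp at this; exact lt_irrefl _ this
      obtain ⟨k, hk⟩ := hex
      have hki : k ≠ i := by
        rintro rfl
        have : ‖y k‖ ^ 2 ≤ t := hy
        linarith
      refine Set.mem_biUnion (Finset.mem_erase.2 ⟨hki, Finset.mem_univ k⟩) ?_
      refine ⟨hy, ?_⟩
      have : (0:ℝ) ≤ ‖y i‖ ^ 2 := sq_nonneg _
      linarith
    · right
      exact hysph
  -- measure bound
  have hsphmeas : MeasurableSet (Metric.sphere (0 : EuclideanSpace ℂ (Fin n)) 1) :=
    Metric.isClosed_sphere.measurableSet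
  have hcompl : μ (Metric.sphere (0 : EuclideanSpace ℂ (Fin n)) 1)ᶜ = 0 := by
    rw [measure_compl hsphmeas (measure_ne_top μ _), hsupp, measure_univ, tsub_self]
  have hstep : μ bad ≤ ∑ j ∈ Finset.univ.erase i, μ (A j) := by
    calc μ bad ≤ μ ((⋃ j ∈ Finset.univ.erase i, A j) ∪
          (Metric.sphere (0 : EuclideanSpace ℂ (Fin n)) 1)ᶜ) := measure_mono hsub
      _ ≤ μ (⋃ j ∈ Finset.univ.erase i, A j) +
          μ (Metric.sphere (0 : EuclideanSpace ℂ (Fin n)) 1)ᶜ := measure_union_le _ _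
      _ = μ (⋃ j ∈ Finset.univ.erase i, A j) := by rw [hcompl, add_zero]
      _ ≤ ∑ j ∈ Finset.univ.erase i, μ (A j) := measure_biUnion_finset_le _ _
  have hAj : ∀ j ∈ Finset.univ.erase i, μ (A j) ≤ (m : ℝ≥0∞)⁻¹ := by
    intro j hj
    have hji : j ≠ i := (Finset.mem_erase.1 hj).1
    exact pair_bound μ hinv i j hji.symm t s htpos.le m hm2 hcrit
  have htot : μ bad ≤ ((n - 1 : ℕ) : ℝ≥0∞) * (m : ℝ≥0∞)⁻¹ := by
    calc μ bad ≤ ∑ j ∈ Finset.univ.erase i, μ (A j) := hstep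
      _ ≤ ∑ _j ∈ Finset.univ.erase i, (m : ℝ≥0∞)⁻¹ := Finset.sum_le_sum hAj
      _ = ((n - 1 : ℕ) : ℝ≥0∞) * (m : ℝ≥0∞)⁻¹ := by
          rw [Finset.sum_const, Finset.card_erase_of_mem (Finset.mem_univ i),
            Finset.card_univ, Fintype.card_fin, nsmul_eq_mul]
  -- to real
  have hfin : ((n - 1 : ℕ) : ℝ≥0∞) * (m : ℝ≥0∞)⁻¹ ≠ ⊤ := by
    apply ENNReal.mul_ne_top (ENNReal.natCast_ne_top _)
    simp only [Ne, ENNReal.inv_eq_top, Nat.cast_eq_zero]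
    omega
  have hreal : (μ bad).toReal ≤ ((n - 1 : ℕ) : ℝ) * (m : ℝ)⁻¹ := by
    have := ENNReal.toReal_mono hfin htot
    rwa [ENNReal.toReal_mul, ENNReal.toReal_inv, ENNReal.toReal_natCast,
      ENNReal.toReal_natCast] at this
  refine hreal.trans ?_
  -- real arithmetic finish
  have hn1 : ((n - 1 : ℕ) : ℝ) = (n : ℝ) - 1 := by
    push_cast [Nat.cast_sub hn]
    ring
  have hD2' : D / 2 ≤ (m : ℝ) := by linarith
  have step1 : ((n - 1 : ℕ) : ℝ) * (m : ℝ)⁻¹ ≤ (2 * n) / D := by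
    rw [hn1]
    have h1 : ((n:ℝ) - 1) * (m:ℝ)⁻¹ ≤ ((n:ℝ) - 1) * (D / 2)⁻¹ := by
      apply mul_le_mul_of_nonneg_left _ (by linarith)
      apply inv_anti₀ (by linarith) hD2'
    have h2 : ((n:ℝ) - 1) * (D / 2)⁻¹ = (2 * n - 2) / D := by
      field_simp
    rw [h2] at h1
    refine h1.trans ?_
    gcongr
    linarith
  refine step1.trans ?_
  have e1 : (2 * (n:ℝ)) / D = (2 * (n:ℝ)) ^ ((3 - 3*c)/2 : ℝ) := by
    have he : (3 - 3*c)/2 = 1 - (3*c-1)/2 := by ring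
    rw [he, Real.rpow_sub h2npos, Real.rpow_one, hDdef]
  rw [e1]
  calc (2 * (n:ℝ)) ^ ((3 - 3*c)/2 : ℝ) ≤ (2 * (n:ℝ)) ^ (1 - c) :=
        Real.rpow_le_rpow_of_exponent_le h2n1.le (by linarith)
    _ ≤ 2 * (2 * (n:ℝ)) ^ (1 - c) := by
        nlinarith [Real.rpow_pos_of_pos h2npos (1 - c)]
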